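/- If τ_{r₁}(k,t,γ) = Σ_λ (r₁)_λ(k) s_λ(t) s_λ(γ) and τ_{r₂}(m,γ,t*) = Σ_λ (r₂)_λ(m) s_λ(γ) s_λ(t*), then their scalar product with respect to ⟨·,·⟩_{r,n} (on the γ variables) is again a series of hypergeometric type: ⟨τ_{r₁}(k,t,·), τ_{r₂}(m,·,t*)⟩_{r,n} = τ_{r₃}(0,t,t*) where r₃(i) = r₁(k+i) r₂(m+i) r(n+i). -/

import Mathlib

open MvPolynomial

/-- Complete symmetric functions `h_n` in the variables `γ` (`X m = γ_m`, `m ≥ 1`),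
determined by `exp(∑_m γ_m z^m) = ∑_n h_n z^n` via Newton's recursion. -/
noncomputable def hh : ℕ → MvPolynomial ℕ ℚ
  | 0 => 1
  | n + 1 => ((n : ℚ) + 1)⁻¹ •
      ∑ k ∈ Finset.range (n + 1), ((k : ℚ) + 1) • (X (k + 1) * hh (n - k))
termination_by n => n
decreasing_by omega

noncomputable def hInt (m : ℤ) : MvPolynomial ℕ ℚ :=
  if m < 0 then 0 else hh m.toNat

/-- The Schur function `s_λ = det(h_{λ_i - i + j})` (Jacobi–Trudi). -/
noncomputable def schur (lam : List ℕ) : MvPolynomial ℕ ℚ :=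
  Matrix.det (Matrix.of fun i j : Fin lam.length =>
    hInt ((lam.get i : ℤ) + (j : ℕ) - (i : ℕ)))

def IsPartition (lam : List ℕ) : Prop :=
  lam.Pairwise (· ≥ ·) ∧ ∀ a ∈ lam, 0 < a

/-- The content product `r_λ(x) = ∏_{(i,j)∈λ} r(x+j-i)`. -/
noncomputable def contentProd (r : ℤ → ℂ) (lam : List ℕ) (x : ℤ) : ℂ :=
  ∏ i ∈ Finset.range lam.length, ∏ j ∈ Finset.range (lam.getD i 0),
    r (x + (j : ℤ) - (i : ℤ))

/-- The coefficient ring: polynomials in the formal parameters `t_m = X (inl m)` and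
`t*_m = X (inr m)` over `ℂ`. -/
abbrev Coef : Type := MvPolynomial (ℕ ⊕ ℕ) ℂ

/-- Symmetric functions in `γ` with coefficients depending on `t, t*`. -/
abbrev LamA : Type := MvPolynomial ℕ Coef

noncomputable def schurA (lam : List ℕ) : LamA :=
  MvPolynomial.map (algebraMap ℚ Coef) (schur lam)

/-- `s_λ(t)`, the Schur function evaluated at the parameters `t`. -/
noncomputable def schurT (lam : List ℕ) : Coef :=
  aeval (fun m => (X (Sum.inl m) : Coef)) (schur lam)

/-- `s_λ(t*)`, the Schur function evaluated at the parameters `t*`. -/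
noncomputable def schurTstar (lam : List ℕ) : Coef :=
  aeval (fun m => (X (Sum.inr m) : Coef)) (schur lam)

noncomputable def partList {N : ℕ} (p : N.Partition) : List ℕ :=
  (Multiset.sort p.parts (· ≤ ·)).reverse


/-- The weight-`N` part (in `γ`) of the hypergeometric-type tau function
`τ_{r₁}(k, t, γ) = ∑_λ (r₁)_λ(k) s_λ(t) s_λ(γ)`. -/
noncomputable def tauT (r₁ : ℤ → ℂ) (k : ℤ) (N : ℕ) : LamA :=
  ∑ p : N.Partition,
    MvPolynomial.C (MvPolynomial.C (contentProd r₁ (partList p) k) * schurT (partList p)) *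
      schurA (partList p)

/-- The weight-`N` part (in `γ`) of `τ_{r₂}(m, γ, t*) = ∑_λ (r₂)_λ(m) s_λ(γ) s_λ(t*)`. -/
noncomputable def tauTstar (r₂ : ℤ → ℂ) (m : ℤ) (N : ℕ) : LamA :=
  ∑ p : N.Partition,
    MvPolynomial.C (MvPolynomial.C (contentProd r₂ (partList p) m) * schurTstar (partList p)) *
      schurA (partList p)


lemma partList_isPartition {N : ℕ} (p : N.Partition) : IsPartition (partList p) := by
  constructor
  · have := Multiset.pairwise_sort (s := p.parts) (r := (· ≤ ·))
    rw [partList]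
    simpa [List.pairwise_reverse, ge_iff_le] using this
  · intro a ha
    apply p.parts_pos
    rw [partList, List.mem_reverse] at ha
    exact (Multiset.mem_sort _).mp ha

lemma partList_injective {N : ℕ} : Function.Injective (partList (N := N)) := by
  intro p q h
  ext1
  have hp : p.parts = ((partList p).reverse : List ℕ) := by
    simp [partList, Multiset.sort_eq]
  have hq : q.parts = ((partList q).reverse : List ℕ) := by
    simp [partList, Multiset.sort_eq]
  rw [hp, hq, h]

lemma contentProd_mul (r r₁ r₂ r₃ : ℤ → ℂ) (n k m : ℤ)
    (hr₃ : ∀ i : ℤ, r₃ i = r₁ (k + i) * r₂ (m + i) * r (n + i)) (lam : List ℕ) :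
    contentProd r₃ lam 0 =
      contentProd r₁ lam k * contentProd r₂ lam m * contentProd r lam n := by
  unfold contentProd
  rw [← Finset.prod_mul_distrib, ← Finset.prod_mul_distrib]
  refine Finset.prod_congr rfl fun i _ => ?_
  rw [← Finset.prod_mul_distrib, ← Finset.prod_mul_distrib]
  refine Finset.prod_congr rfl fun j _ => ?_
  rw [hr₃ ((0 : ℤ) + j - i)]
  congr 2 <;> ring_nf
/-- **The scalar product of two hypergeometric-type tau functions is again of
hypergeometric type**: if `B(s_λ, s_μ) = r_λ(n) δ_{λμ}` (over the ring of parameters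
`t, t*`) and `r₃(i) = r₁(k+i) r₂(m+i) r(n+i)`, then, weight by weight,
`⟨τ_{r₁}(k,t,·), τ_{r₂}(m,·,t*)⟩_{r,n} = τ_{r₃}(0,t,t*) = ∑_λ (r₃)_λ(0) s_λ(t) s_λ(t*)`. -/
theorem scalar_product_of_tau_functions (r r₁ r₂ r₃ : ℤ → ℂ) (n k m : ℤ)
    (hr₃ : ∀ i : ℤ, r₃ i = r₁ (k + i) * r₂ (m + i) * r (n + i))
    (B : LamA →ₗ[Coef] LamA →ₗ[Coef] Coef)
    (hB : ∀ lam mu : List ℕ, IsPartition lam → IsPartition mu →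
      B (schurA lam) (schurA mu) =
        if lam = mu then MvPolynomial.C (contentProd r lam n) else 0)
    (N : ℕ) :
    B (tauT r₁ k N) (tauTstar r₂ m N) =
      ∑ p : N.Partition,
        MvPolynomial.C (contentProd r₃ (partList p) 0) *
          schurT (partList p) * schurTstar (partList p) := by
  classical
  unfold tauT tauTstar
  simp only [← MvPolynomial.smul_eq_C_mul, map_sum, LinearMap.sum_apply, map_smul,
    LinearMap.smul_apply]
  simp only [Finset.smul_sum]
  have step : ∀ p q : N.Partition,
      (contentProd r₂ (partList p) m • schurTstar (partList p)) •
        ((contentProd r₁ (partList q) k • schurT (partList q)) •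
          B (schurA (partList q)) (schurA (partList p))) =
      if q = p then contentProd r₃ (partList p) 0 • schurT (partList p) *
          schurTstar (partList p) else 0 := by
    intro p q
    rw [hB _ _ (partList_isPartition q) (partList_isPartition p)]
    by_cases h : q = p
    · subst h
      rw [if_pos rfl]
      simp only [smul_eq_mul, Algebra.smul_def, algebraMap_eq, eq_self_iff_true, if_true]
      rw [contentProd_mul r r₁ r₂ r₃ n k m hr₃, map_mul, map_mul]
      ring
    · rw [if_neg (fun hh => h (partList_injective hh)), smul_zero, smul_zero, if_neg h]
  simp only [step]
  refine Finset.sum_congr rfl fun p _ => ?_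
  rw [Finset.sum_ite_eq']
  simp
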